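/- arXiv:2402.13620 — 9 statements merged into one kernel-verified Lean document; each statement's English description precedes it below -/
import Mathlib

section
/- Let m, n, w : ℝ × ℝ → ℝ be differentiable functions with m(x,t) > 0 and n(x,t) > 0 for all (x,t). If m and n satisfy the two-component modified Camassa–Holm system ∂_t m + ∂_x(w m) = 0 and ∂_t n + ∂_x(w n) = 0 everywhere, then the conservation law ∂_t(√(m n)) + ∂_x(w √(m n)) = 0 holds everywhere. -/
/-- **Conservation law for the 2-component modified Camassa–Holm system.**
If `m, n, w : ℝ × ℝ → ℝ` are differentiable, `m, n > 0` everywhere, and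
`∂ₜ m + ∂ₓ(w m) = 0`, `∂ₜ n + ∂ₓ(w n) = 0` hold everywhere, then
`∂ₜ √(mn) + ∂ₓ(w √(mn)) = 0` everywhere.  Here `∂ₓ` and `∂ₜ` are the
derivatives in the first and second variable respectively. -/
theorem conservation_law_sqrt_mn
    (m n w : ℝ × ℝ → ℝ)
    (hm : Differentiable ℝ m) (hn : Differentiable ℝ n) (hw : Differentiable ℝ w)
    (hmpos : ∀ p : ℝ × ℝ, 0 < m p) (hnpos : ∀ p : ℝ × ℝ, 0 < n p)
    (heqm : ∀ x t : ℝ,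
      deriv (fun t' => m (x, t')) t + deriv (fun x' => w (x', t) * m (x', t)) x = 0)
    (heqn : ∀ x t : ℝ,
      deriv (fun t' => n (x, t')) t + deriv (fun x' => w (x', t) * n (x', t)) x = 0) :
    ∀ x t : ℝ,
      deriv (fun t' => Real.sqrt (m (x, t') * n (x, t'))) t
        + deriv (fun x' => w (x', t) * Real.sqrt (m (x', t) * n (x', t))) x = 0 := by
  intro x t
  have hxt : HasDerivAt (fun t' => ((x, t') : ℝ × ℝ)) ((0 : ℝ), (1 : ℝ)) t :=
    HasDerivAt.prodMk (hasDerivAt_const t x) (hasDerivAt_id t)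
  have hx't : HasDerivAt (fun x' => ((x', t) : ℝ × ℝ)) ((1 : ℝ), (0 : ℝ)) x :=
    HasDerivAt.prodMk (hasDerivAt_id x) (hasDerivAt_const x t)
  set Mt := fderiv ℝ m (x, t) (0, 1) with hMt
  set Mx := fderiv ℝ m (x, t) (1, 0) with hMx
  set Nt := fderiv ℝ n (x, t) (0, 1) with hNt
  set Nx := fderiv ℝ n (x, t) (1, 0) with hNx
  set Wx := fderiv ℝ w (x, t) (1, 0) with hWx
  have hmt : HasDerivAt (fun t' => m (x, t')) Mt t :=
    (hm (x, t)).hasFDerivAt.comp_hasDerivAt t hxt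
  have hmx : HasDerivAt (fun x' => m (x', t)) Mx x :=
    (hm (x, t)).hasFDerivAt.comp_hasDerivAt x hx't
  have hnt : HasDerivAt (fun t' => n (x, t')) Nt t :=
    (hn (x, t)).hasFDerivAt.comp_hasDerivAt t hxt
  have hnx : HasDerivAt (fun x' => n (x', t)) Nx x :=
    (hn (x, t)).hasFDerivAt.comp_hasDerivAt x hx't
  have hwx : HasDerivAt (fun x' => w (x', t)) Wx x :=
    (hw (x, t)).hasFDerivAt.comp_hasDerivAt x hx't
  have hpos : 0 < m (x, t) * n (x, t) := mul_pos (hmpos _) (hnpos _)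
  have hsne : m (x, t) * n (x, t) ≠ 0 := ne_of_gt hpos
  have hspos : 0 < Real.sqrt (m (x, t) * n (x, t)) := Real.sqrt_pos.mpr hpos
  have hs2 : Real.sqrt (m (x, t) * n (x, t)) ^ 2 = m (x, t) * n (x, t) :=
    Real.sq_sqrt hpos.le
  have hst : HasDerivAt (fun t' => Real.sqrt (m (x, t') * n (x, t')))
      ((Mt * n (x, t) + m (x, t) * Nt) / (2 * Real.sqrt (m (x, t) * n (x, t)))) t :=
    (hmt.mul hnt).sqrt hsne
  have hsx : HasDerivAt (fun x' => Real.sqrt (m (x', t) * n (x', t)))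
      ((Mx * n (x, t) + m (x, t) * Nx) / (2 * Real.sqrt (m (x, t) * n (x, t)))) x :=
    (hmx.mul hnx).sqrt hsne
  have e1 := heqm x t
  have e2 := heqn x t
  rw [hmt.deriv, (hwx.fun_mul hmx).deriv] at e1
  rw [hnt.deriv, (hwx.fun_mul hnx).deriv] at e2
  rw [hst.deriv, (hwx.fun_mul hsx).deriv]
  have hs0 : Real.sqrt (m (x, t) * n (x, t)) ≠ 0 := ne_of_gt hspos
  have hinv : Real.sqrt (m (x, t) * n (x, t)) * (Real.sqrt (m (x, t) * n (x, t)))⁻¹ = 1 :=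
    mul_inv_cancel₀ hs0
  linear_combination (n (x, t) * e1 + m (x, t) * e2 + 2 * Wx * hs2) / (2 * Real.sqrt (m (x, t) * n (x, t)))
    - Wx * Real.sqrt (m (x, t) * n (x, t)) * hinv
end

section
/- Fix λ ∈ ℂ. Let m, n : ℝ → ℝ be differentiable with m(x) > 0 and n(x) > 0 for all x, and let Ψ : ℝ → M₂(ℂ) be differentiable with Ψ'(x) = U(x) Ψ(x), where U(x) = (1/2) [[−1, λ m(x)], [−λ n(x), 1]]. Define the gauge matrix A(x) = (m(x) n(x))^{−1/4} diag(n(x)^{1/2}, m(x)^{1/2}). Then Ψ̂ := A Ψ satisfies Ψ̂'(x) = Û(x) Ψ̂(x), where Û(x) = (1/2) [[−1, λ √(m(x) n(x))], [−λ √(m(x) n(x)), 1]] + ((m(x) n'(x) − m'(x) n(x))/(4 m(x) n(x))) diag(1, −1). In particular the gauge-transformed Lax matrix Û is symmetric in its off-diagonal entries and has zero trace. -/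
open Matrix Complex

lemma gauge_aux_deriv (f g : ℝ → ℝ) (hf : Differentiable ℝ f) (hg : Differentiable ℝ g)
    (hfp : ∀ x, 0 < f x) (hgp : ∀ x, 0 < g x) (x : ℝ) :
    HasDerivAt (fun y => (f y * g y) ^ (-(1/4:ℝ)) * Real.sqrt (g y))
      ((f x * g x) ^ (-(1/4:ℝ)) * Real.sqrt (g x) *
        ((f x * deriv g x - deriv f x * g x) / (4 * f x * g x))) x := by
  have hM : 0 < f x := hfp x
  have hN : 0 < g x := hgp x
  have hP : 0 < f x * g x := mul_pos hM hN
  have hsN : 0 < Real.sqrt (g x) := Real.sqrt_pos.2 hN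
  have hF : HasDerivAt f (deriv f x) x := (hf x).hasDerivAt
  have hG : HasDerivAt g (deriv g x) x := (hg x).hasDerivAt
  have h1 : HasDerivAt (fun y => (f y * g y) ^ (-(1/4:ℝ)))
      ((deriv f x * g x + f x * deriv g x) * (-(1/4)) * (f x * g x) ^ (-(1/4:ℝ) - 1)) x :=
    (hF.mul hG).rpow_const (Or.inl hP.ne')
  have h2 : HasDerivAt (fun y => Real.sqrt (g y)) (deriv g x / (2 * Real.sqrt (g x))) x :=
    hG.sqrt hN.ne'
  have h := h1.mul h2
  refine h.congr_deriv (Eq.symm ?_)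
  rw [Real.rpow_sub_one hP.ne']
  have hsq : Real.sqrt (g x) * Real.sqrt (g x) = g x := Real.mul_self_sqrt hN.le
  field_simp
  ring_nf
  rw [Real.sq_sqrt hN.le]
  ring

/-- **Gauge transformation symmetrizing the Lax matrix of the 2-mCH equation.**
Fix `λ ∈ ℂ`.  If `Ψ' = U Ψ` with `U = (1/2)[[-1, λ m],[-λ n, 1]]`, and
`A = (mn)^{-1/4} diag(√n, √m)`, then `Ψ̂ = A Ψ` satisfies `Ψ̂' = Û Ψ̂` where
`Û = (1/2)[[-1, λ√(mn)],[-λ√(mn), 1]] + ((m n' - m' n)/(4mn)) diag(1,-1)`,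
which is symmetric in the off-diagonal entries and trace-free. -/
theorem gauge_transform_symmetrizes_lax
    (lam : ℂ) (m n : ℝ → ℝ)
    (hm : Differentiable ℝ m) (hn : Differentiable ℝ n)
    (hmpos : ∀ x, 0 < m x) (hnpos : ∀ x, 0 < n x)
    (Ψ : ℝ → Matrix (Fin 2) (Fin 2) ℂ)
    (U : ℝ → Matrix (Fin 2) (Fin 2) ℂ)
    (hU : ∀ x, U x = (1/2 : ℂ) •
      !![(-1 : ℂ), lam * (m x : ℂ); -lam * (n x : ℂ), 1])
    (hΨ : ∀ x, ∀ i j : Fin 2, HasDerivAt (fun y => Ψ y i j) ((U x * Ψ x) i j) x)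
    (A : ℝ → Matrix (Fin 2) (Fin 2) ℂ)
    (hA : ∀ x, A x = (((m x * n x) ^ (-(1/4 : ℝ)) : ℝ) : ℂ) •
      !![((Real.sqrt (n x) : ℝ) : ℂ), 0; 0, ((Real.sqrt (m x) : ℝ) : ℂ)])
    (Uhat : ℝ → Matrix (Fin 2) (Fin 2) ℂ)
    (hUhat : ∀ x, Uhat x = (1/2 : ℂ) •
        !![(-1 : ℂ), lam * (Real.sqrt (m x * n x) : ℂ);
           -lam * (Real.sqrt (m x * n x) : ℂ), 1]
      + (((m x * deriv n x - deriv m x * n x) / (4 * m x * n x) : ℝ) : ℂ) •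
        !![(1 : ℂ), 0; 0, -1]) :
    (∀ x, ∀ i j : Fin 2,
        HasDerivAt (fun y => (A y * Ψ y) i j) ((Uhat x * (A x * Ψ x)) i j) x)
    ∧ (∀ x, Uhat x 0 1 = - Uhat x 1 0)
    ∧ (∀ x, Matrix.trace (Uhat x) = 0) := by
  refine ⟨?_, ?_, ?_⟩
  · intro x i j
    have hM : 0 < m x := hmpos x
    have hN : 0 < n x := hnpos x
    have ha : HasDerivAt (fun y => (m y * n y) ^ (-(1/4:ℝ)) * Real.sqrt (n y))
        ((m x * n x) ^ (-(1/4:ℝ)) * Real.sqrt (n x)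
          * ((m x * deriv n x - deriv m x * n x) / (4 * m x * n x))) x :=
      gauge_aux_deriv m n hm hn hmpos hnpos x
    have hb : HasDerivAt (fun y => (m y * n y) ^ (-(1/4:ℝ)) * Real.sqrt (m y))
        ((m x * n x) ^ (-(1/4:ℝ)) * Real.sqrt (m x)
          * (-((m x * deriv n x - deriv m x * n x) / (4 * m x * n x)))) x := by
      have hb0 := gauge_aux_deriv n m hn hm hnpos hmpos x
      have hfun : (fun y => (n y * m y) ^ (-(1/4:ℝ)) * Real.sqrt (m y))
          = (fun y => (m y * n y) ^ (-(1/4:ℝ)) * Real.sqrt (m y)) := by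
        funext y; rw [mul_comm (n y)]
      rw [hfun] at hb0
      convert hb0 using 2
      · rw [mul_comm (n x)]
      · field_simp; ring
    have hsmC : ((Real.sqrt (m x) : ℂ)) * (Real.sqrt (m x) : ℂ) = (m x : ℂ) := by
      exact_mod_cast Real.mul_self_sqrt hM.le
    have hsnC : ((Real.sqrt (n x) : ℂ)) * (Real.sqrt (n x) : ℂ) = (n x : ℂ) := by
      exact_mod_cast Real.mul_self_sqrt hN.le
    fin_cases i
    · have key : (fun y => (A y * Ψ y) 0 j)
          = fun y => ((((m y * n y) ^ (-(1/4:ℝ)) * Real.sqrt (n y) : ℝ)) : ℂ) * Ψ y 0 j := by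
        funext y
        rw [hA y]
        simp [Matrix.mul_apply, Fin.sum_univ_two]
      rw [show ((⟨0, by norm_num⟩ : Fin 2) : Fin 2) = 0 from rfl, key]
      have hdC := (ha.ofReal_comp).mul (hΨ x 0 j)
      refine hdC.congr_deriv (Eq.symm ?_)
      rw [hUhat x, hU x, hA x]
      rw [Real.sqrt_mul hM.le]
      simp [Matrix.mul_apply, Matrix.vecMul, dotProduct, Fin.sum_univ_two,
        Matrix.smul_apply, Matrix.add_apply]
      linear_combination (2⁻¹ * lam * ((Real.sqrt (n x) : ℝ) : ℂ)
        * (((m x * n x) ^ (-4⁻¹:ℝ) : ℝ) : ℂ) * Ψ x 1 j) * hsmC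
    · have key : (fun y => (A y * Ψ y) 1 j)
          = fun y => ((((m y * n y) ^ (-(1/4:ℝ)) * Real.sqrt (m y) : ℝ)) : ℂ) * Ψ y 1 j := by
        funext y
        rw [hA y]
        simp [Matrix.mul_apply, Fin.sum_univ_two]
      rw [show ((⟨1, by norm_num⟩ : Fin 2) : Fin 2) = 1 from rfl, key]
      have hdC := (hb.ofReal_comp).mul (hΨ x 1 j)
      refine hdC.congr_deriv (Eq.symm ?_)
      rw [hUhat x, hU x, hA x]
      rw [Real.sqrt_mul hM.le]
      simp [Matrix.mul_apply, Matrix.vecMul, dotProduct, Fin.sum_univ_two,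
        Matrix.smul_apply, Matrix.add_apply]
      linear_combination (-2⁻¹ * lam * ((Real.sqrt (m x) : ℝ) : ℂ)
        * (((m x * n x) ^ (-4⁻¹:ℝ) : ℝ) : ℂ) * Ψ x 0 j) * hsnC
  · intro x
    rw [hUhat x]
    simp [Matrix.add_apply, Matrix.smul_apply]
  · intro x
    rw [hUhat x]
    simp [Matrix.trace_fin_two, Matrix.add_apply, Matrix.smul_apply]
    ring
end

section
/- Fix k ∈ ℂ with k ≠ 0 and k² ≠ −1 and k² ≠ 1. Let g, w : ℝ × ℝ → ℝ be C¹ functions such that: (i) ∂_t g + ∂_x(w g) = 0 everywhere; (ii) for every t the function s ↦ g(s,t) − 1 is integrable on ℝ, and for every x and every compact time interval J there is an integrable function G on [x,∞) with |∂_t g(s,t)| ≤ G(s) for all s ≥ x, t ∈ J; (iii) for every t, w(s,t) g(s,t) → 0 as s → +∞. Define p̃(x,t) = ((k²−1)/(4k)) ( x − ∫_x^{+∞} (g(s,t) − 1) ds ) − (2k(k²−1)/(k²+1)²) t. Then for all (x,t): ∂_x p̃(x,t) = ((k²−1)/(4k)) g(x,t) and ∂_t p̃(x,t) = −((k²−1)/(4k))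 w(x,t) g(x,t) − 2k(k²−1)/(k²+1)². -/
open MeasureTheory Filter Complex

private lemma hasDerivAt_integral_Ioi_aux {f : ℝ → ℝ} (hf : Integrable f)
    (hc : Continuous f) (x : ℝ) :
    HasDerivAt (fun x' => ∫ s in Set.Ioi x', f s) (-(f x)) x := by
  have split : ∀ a b : ℝ, a ≤ b →
      (∫ s in Set.Ioi a, f s) = (∫ s in Set.Ioc a b, f s) + ∫ s in Set.Ioi b, f s := by
    intro a b hab
    rw [← setIntegral_union (Set.Ioc_disjoint_Ioi le_rfl) measurableSet_Ioi
      hf.integrableOn hf.integrableOn, Set.Ioc_union_Ioi_eq_Ioi hab]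
  have key : ∀ x' : ℝ, (∫ s in Set.Ioi x', f s)
      = (∫ s in Set.Ioi (0:ℝ), f s) - ∫ s in (0:ℝ)..x', f s := by
    intro x'
    rcases le_total 0 x' with h | h
    · rw [intervalIntegral.integral_of_le h, split 0 x' h]; ring
    · rw [intervalIntegral.integral_of_ge h, split x' 0 h]; ring
  have hd : HasDerivAt (fun x' => (∫ s in Set.Ioi (0:ℝ), f s) - ∫ s in (0:ℝ)..x', f s)
      (-(f x)) x :=
    (intervalIntegral.integral_hasDerivAt_right hf.intervalIntegrable
      (hc.stronglyMeasurableAtFilter _ _) hc.continuousAt).const_sub _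
  simpa only [← key] using hd

/-- **Derivatives of the phase function `p̃` built from the conservation law.**
Fix `k ∈ ℂ` with `k ≠ 0`, `k² ≠ -1`, `k² ≠ 1`.  Let `g, w` be `C¹` with
`∂ₜ g + ∂ₓ(w g) = 0`, `g(·,t) - 1` integrable, a locally-in-time uniform
integrable bound for `∂ₜ g`, and `w g → 0` at `+∞`.  Then
`p̃(x,t) = ((k²-1)/(4k)) (x - ∫ₓ^∞ (g-1)) - (2k(k²-1)/(k²+1)²) t` satisfies
`∂ₓ p̃ = ((k²-1)/(4k)) g` and `∂ₜ p̃ = -((k²-1)/(4k)) w g - 2k(k²-1)/(k²+1)²`. -/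
theorem phase_function_derivatives
    (k : ℂ) (hk0 : k ≠ 0) (hkm1 : k ^ 2 ≠ -1) (hk1 : k ^ 2 ≠ 1)
    (g w : ℝ × ℝ → ℝ)
    (hg : ContDiff ℝ 1 g) (hw : ContDiff ℝ 1 w)
    (hcons : ∀ x t : ℝ,
      deriv (fun t' => g (x, t')) t + deriv (fun x' => w (x', t) * g (x', t)) x = 0)
    (hint : ∀ t : ℝ, Integrable (fun s => g (s, t) - 1))
    (hdom : ∀ x : ℝ, ∀ J : Set ℝ, IsCompact J → ∃ G : ℝ → ℝ,
      IntegrableOn G (Set.Ici x) ∧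
      ∀ s : ℝ, x ≤ s → ∀ t ∈ J, |deriv (fun t' => g (s, t')) t| ≤ G s)
    (hwg : ∀ t : ℝ, Tendsto (fun s => w (s, t) * g (s, t)) atTop (nhds 0))
    (ptilde : ℝ → ℝ → ℂ)
    (hpt : ∀ x t : ℝ, ptilde x t =
      ((k ^ 2 - 1) / (4 * k)) *
        ((x : ℂ) - ((∫ s in Set.Ioi x, (g (s, t) - 1)) : ℝ))
      - (2 * k * (k ^ 2 - 1) / (k ^ 2 + 1) ^ 2) * (t : ℂ)) :
    ∀ x t : ℝ,
      HasDerivAt (fun x' => ptilde x' t)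
        (((k ^ 2 - 1) / (4 * k)) * ((g (x, t) : ℝ) : ℂ)) x
      ∧ HasDerivAt (fun t' => ptilde x t')
        (-((k ^ 2 - 1) / (4 * k)) * ((w (x, t) * g (x, t) : ℝ) : ℂ)
          - 2 * k * (k ^ 2 - 1) / (k ^ 2 + 1) ^ 2) t := by
  intro x t
  have hprod : ∀ u : ℝ, Continuous fun s : ℝ => (s, u) :=
    fun u => continuous_id.prodMk continuous_const
  have hcurve : ∀ s : ℝ, ContDiff ℝ 1 fun u : ℝ => ((s, u) : ℝ × ℝ) :=
    fun s => contDiff_const.prodMk contDiff_id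
  -- derivative of g in the second variable
  have hgt : ∀ s u : ℝ, HasDerivAt (fun u' => g (s, u')) (fderiv ℝ g (s, u) (0, 1)) u := by
    intro s u
    exact ((hg.differentiable one_ne_zero) (s, u)).hasFDerivAt.comp_hasDerivAt u
      ((hasDerivAt_const u s).prodMk (hasDerivAt_id u))
  have hderiv_eq : ∀ s u : ℝ, deriv (fun u' => g (s, u')) u = fderiv ℝ g (s, u) (0, 1) :=
    fun s u => (hgt s u).deriv
  -- x-derivative of the integral
  have hcont_gt : Continuous fun s => g (s, t) - 1 :=
    (hg.continuous.comp (hprod t)).sub continuous_const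
  have hIx : HasDerivAt (fun x' => ∫ s in Set.Ioi x', (g (s, t) - 1))
      (-(g (x, t) - 1)) x := hasDerivAt_integral_Ioi_aux (hint t) hcont_gt x
  -- the spatial function h(s) = w(s,t) g(s,t)
  set h : ℝ → ℝ := fun s => w (s, t) * g (s, t) with hh_def
  have hhC1 : ContDiff ℝ 1 h :=
    (hw.comp (contDiff_id.prodMk contDiff_const)).mul (hg.comp (contDiff_id.prodMk contDiff_const))
  have hcons' : ∀ s : ℝ, fderiv ℝ g (s, t) (0, 1) = -deriv h s := by
    intro s
    have := hcons s t
    rw [hderiv_eq] at this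
    linarith
  -- dominating function
  obtain ⟨G, hGint, hGbd⟩ := hdom x (Metric.closedBall t 1) (isCompact_closedBall t 1)
  have hGint' : Integrable G (volume.restrict (Set.Ioi x)) :=
    hGint.mono_set Set.Ioi_subset_Ici_self
  -- integrability of deriv h on Ioi x
  have hdh_cont : Continuous (deriv h) := hhC1.continuous_deriv le_rfl
  have hdh_int : IntegrableOn (deriv h) (Set.Ioi x) := by
    refine Integrable.mono' hGint' hdh_cont.aestronglyMeasurable.restrict ?_
    filter_upwards [ae_restrict_mem measurableSet_Ioi] with s hs
    have h1 : |deriv (fun t' => g (s, t')) t| ≤ G s :=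
      hGbd s (le_of_lt hs) t (Metric.mem_closedBall_self zero_le_one)
    rw [hderiv_eq, hcons'] at h1
    simpa [Real.norm_eq_abs, abs_neg] using h1
  -- FTC on the half-line
  have hFTC : (∫ s in Set.Ioi x, deriv h s) = 0 - h x :=
    integral_Ioi_of_hasDerivAt_of_tendsto'
      (fun s _ => ((hhC1.differentiable one_ne_zero) s).hasDerivAt) hdh_int (hwg t)
  -- value of the t-derivative integral
  have hval : (∫ s in Set.Ioi x, fderiv ℝ g (s, t) (0, 1)) = w (x, t) * g (x, t) := by
    rw [MeasureTheory.setIntegral_congr_fun measurableSet_Ioi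
      (fun s _ => hcons' s), integral_neg, hFTC]
    simp [hh_def]
  -- t-derivative of the integral by dominated differentiation
  have main := hasDerivAt_integral_of_dominated_loc_of_deriv_le
    (μ := volume.restrict (Set.Ioi x))
    (F := fun t' s => g (s, t') - 1)
    (F' := fun t' s => fderiv ℝ g (s, t') (0, 1))
    (x₀ := t) (bound := G) (Metric.ball_mem_nhds t one_pos)
    (Eventually.of_forall fun t' =>
      (((hg.continuous.comp (hprod t')).sub continuous_const).aestronglyMeasurable).restrict)
    ((hint t).restrict)
    (((hg.continuous_fderiv one_ne_zero).comp (hprod t)).clm_apply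
      continuous_const).aestronglyMeasurable.restrict
    (by
      filter_upwards [ae_restrict_mem measurableSet_Ioi] with s hs
      intro t' ht'
      have := hGbd s (le_of_lt hs) t' (Metric.ball_subset_closedBall ht')
      rw [hderiv_eq] at this
      simpa [Real.norm_eq_abs] using this)
    hGint'
    (Eventually.of_forall fun s t' _ => (hgt s t').sub_const 1)
  have hIt : HasDerivAt (fun t' => ∫ s in Set.Ioi x, (g (s, t') - 1))
      (w (x, t) * g (x, t)) t := hval ▸ main.2
  -- assemble the complex derivatives
  constructor
  · have hfun : (fun x' => ptilde x' t) = fun x' : ℝ =>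
        ((k ^ 2 - 1) / (4 * k)) *
          ((x' : ℂ) - ((∫ s in Set.Ioi x', (g (s, t) - 1)) : ℝ))
        - (2 * k * (k ^ 2 - 1) / (k ^ 2 + 1) ^ 2) * (t : ℂ) :=
      funext fun x' => hpt x' t
    rw [hfun]
    have hd := (((hasDerivAt_id x).ofReal_comp.sub hIx.ofReal_comp).const_mul
      ((k ^ 2 - 1) / (4 * k))).sub_const
      ((2 * k * (k ^ 2 - 1) / (k ^ 2 + 1) ^ 2) * (t : ℂ))
    refine hd.congr_deriv ?_
    push_cast
    ring
  · have hfun : (fun t' => ptilde x t') = fun t' : ℝ =>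
        ((k ^ 2 - 1) / (4 * k)) *
          ((x : ℂ) - ((∫ s in Set.Ioi x, (g (s, t') - 1)) : ℝ))
        - (2 * k * (k ^ 2 - 1) / (k ^ 2 + 1) ^ 2) * (t' : ℂ) :=
      funext fun t' => hpt x t'
    rw [hfun]
    have hd := (((hasDerivAt_const t ((x : ℝ) : ℂ)).sub hIt.ofReal_comp).const_mul
      ((k ^ 2 - 1) / (4 * k))).sub
      (((hasDerivAt_id t).ofReal_comp).const_mul (2 * k * (k ^ 2 - 1) / (k ^ 2 + 1) ^ 2))
    refine hd.congr_deriv ?_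
    push_cast
    ring
end

section
/- Define θ(k, ξ) = ((k² − 1)/(4k)) ξ − 2k(k² − 1)/(k² + 1)². Then for all real t, ξ and all k ∈ ℂ with k ≠ 0 and k² ≠ −1, writing a = Re k and b = Im k, one has Re(2 i t θ(k, ξ)) = −2 t b [ (ξ/4)(1 + (a² + b²)^{−1}) + 2 ( (a²+b²)³ − 2(a²+b²)² − (3a² − b²)(1 + a² + b²) − 2(a²+b²) + 1 ) / ( ((a² − b² + 1)² + 4a²b²)² ) ]. -/
/-!
Since `t` is real, `Re(2 i t θ) = -2 t Im θ`. The imaginary part of each quotient in `θ` is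
read off after multiplying numerator and denominator by the conjugate of the denominator,
`Im(z / w²) = Im(z · w̄²) / |w|⁴`, which turns the claim into a polynomial identity in
`a = Re k`, `b = Im k`.
-/

open Complex ComplexConjugate

namespace Complex

lemma re_two_mul_I_mul_ofReal_mul (t : ℝ) (z : ℂ) : (2 * I * t * z).re = -2 * t * z.im := by
  simp [mul_re, mul_im]

lemma im_div_sq (z w : ℂ) : (z / w ^ 2).im = (z * conj w ^ 2).im / normSq w ^ 2 := by
  rw [div_eq_mul_inv, ← inv_pow, inv_def, mul_pow, ← mul_assoc, ← ofReal_pow, im_mul_ofReal,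
    inv_pow, div_eq_mul_inv]

lemma normSq_sq_add_one (k : ℂ) :
    normSq (k ^ 2 + 1) = (k.re ^ 2 - k.im ^ 2 + 1) ^ 2 + 4 * k.re ^ 2 * k.im ^ 2 := by
  simp only [normSq_apply, add_re, add_im, pow_two, mul_re, mul_im, one_re, one_im]
  ring

lemma im_sq_sub_one_div_four_mul (k : ℂ) :
    ((k ^ 2 - 1) / (4 * k)).im = k.im / 4 * (1 + (k.re ^ 2 + k.im ^ 2)⁻¹) := by
  have hsplit : (k ^ 2 - 1) / (4 * k) = (k * k * k⁻¹ - k⁻¹) / 4 := by ring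
  rw [hsplit, mul_self_mul_inv, div_ofNat_im, sub_im, inv_im, normSq_apply]
  ring

lemma im_two_mul_mul_sq_sub_one_mul_conj_sq_add_one_sq (k : ℂ) :
    (2 * k * (k ^ 2 - 1) * conj (k ^ 2 + 1) ^ 2).im
      = -2 * k.im * ((k.re ^ 2 + k.im ^ 2) ^ 3 - 2 * (k.re ^ 2 + k.im ^ 2) ^ 2
          - (3 * k.re ^ 2 - k.im ^ 2) * (1 + k.re ^ 2 + k.im ^ 2)
          - 2 * (k.re ^ 2 + k.im ^ 2) + 1) := by
  simp only [mul_re, mul_im, sub_re, sub_im, add_re, add_im, conj_re, conj_im, pow_two,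
    one_re, one_im, re_ofNat, im_ofNat]
  ring

end Complex

theorem re_two_i_t_theta_general
    (t ξ : ℝ) (k : ℂ) :
    (2 * Complex.I * (t : ℂ) *
        (((k ^ 2 - 1) / (4 * k)) * (ξ : ℂ)
          - 2 * k * (k ^ 2 - 1) / (k ^ 2 + 1) ^ 2)).re
    = -2 * t * k.im *
        (ξ / 4 * (1 + (k.re ^ 2 + k.im ^ 2)⁻¹)
          + 2 * ((k.re ^ 2 + k.im ^ 2) ^ 3 - 2 * (k.re ^ 2 + k.im ^ 2) ^ 2
              - (3 * k.re ^ 2 - k.im ^ 2) * (1 + k.re ^ 2 + k.im ^ 2)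
              - 2 * (k.re ^ 2 + k.im ^ 2) + 1)
            / ((k.re ^ 2 - k.im ^ 2 + 1) ^ 2 + 4 * k.re ^ 2 * k.im ^ 2) ^ 2) := by
  rw [re_two_mul_I_mul_ofReal_mul, sub_im, im_mul_ofReal, im_sq_sub_one_div_four_mul, im_div_sq,
    im_two_mul_mul_sq_sub_one_mul_conj_sq_add_one_sq, normSq_sq_add_one]
  ring

/-- **Real part of `2itθ` for the 2-mCH phase function.**
With `θ(k,ξ) = ((k²-1)/(4k))ξ - 2k(k²-1)/(k²+1)²`, for all real `t, ξ` and
`k ∈ ℂ` with `k ≠ 0`, `k² ≠ -1`, writing `a = Re k`, `b = Im k`: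
`Re(2itθ) = -2tb[ (ξ/4)(1+(a²+b²)⁻¹)
  + 2((a²+b²)³ - 2(a²+b²)² - (3a²-b²)(1+a²+b²) - 2(a²+b²) + 1)
      / ((a²-b²+1)² + 4a²b²)² ]`. -/
theorem re_two_i_t_theta
    (t ξ : ℝ) (k : ℂ) (hk : k ≠ 0) (hk2 : k ^ 2 ≠ -1) :
    (2 * Complex.I * (t : ℂ) *
        (((k ^ 2 - 1) / (4 * k)) * (ξ : ℂ)
          - 2 * k * (k ^ 2 - 1) / (k ^ 2 + 1) ^ 2)).re
    = -2 * t * k.im *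
        (ξ / 4 * (1 + (k.re ^ 2 + k.im ^ 2)⁻¹)
          + 2 * ((k.re ^ 2 + k.im ^ 2) ^ 3 - 2 * (k.re ^ 2 + k.im ^ 2) ^ 2
              - (3 * k.re ^ 2 - k.im ^ 2) * (1 + k.re ^ 2 + k.im ^ 2)
              - 2 * (k.re ^ 2 + k.im ^ 2) + 1)
            / ((k.re ^ 2 - k.im ^ 2 + 1) ^ 2 + 4 * k.re ^ 2 * k.im ^ 2) ^ 2) :=
  re_two_i_t_theta_general t ξ k
end

section
/- Define h(k) = 8k²(6k² − k⁴ − 1)/(k² + 1)⁴ for real k ≠ 0. Then h(k) ≥ −1/4 for every real k ≠ 0, with equality if and only if k² = 7 − 4√3 or k² = 7 + 4√3. -/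
/-- **Lower bound `h(k) ≥ -1/4` with equality exactly at `k² = 7 ∓ 4√3`.**
For `h(k) = 8k²(6k²-k⁴-1)/(k²+1)⁴` and real `k ≠ 0`, one has `h(k) ≥ -1/4`,
with equality iff `k² = 7 - 4√3` or `k² = 7 + 4√3`. -/
theorem h_ge_neg_quarter
    (h : ℝ → ℝ)
    (hh : ∀ k : ℝ, h k = 8 * k ^ 2 * (6 * k ^ 2 - k ^ 4 - 1) / (k ^ 2 + 1) ^ 4) :
    ∀ k : ℝ, k ≠ 0 →
      (-(1/4 : ℝ) ≤ h k ∧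
        (h k = -(1/4 : ℝ) ↔
          k ^ 2 = 7 - 4 * Real.sqrt 3 ∨ k ^ 2 = 7 + 4 * Real.sqrt 3)) := by
  intro k hk
  set t : ℝ := k ^ 2 with ht
  have hden : (0:ℝ) < (t + 1) ^ 4 := by positivity
  have key : h k + 1/4 = (t ^ 2 - 14 * t + 1) ^ 2 / (4 * (t + 1) ^ 4) := by
    rw [hh k]
    rw [ht]
    field_simp
    ring
  have hs3 : Real.sqrt 3 ^ 2 = 3 := Real.sq_sqrt (by norm_num)
  have factor : t ^ 2 - 14 * t + 1
      = (t - (7 - 4 * Real.sqrt 3)) * (t - (7 + 4 * Real.sqrt 3)) := by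
    nlinarith [hs3]
  constructor
  · have : (0:ℝ) ≤ (t ^ 2 - 14 * t + 1) ^ 2 / (4 * (t + 1) ^ 4) := by positivity
    linarith
  · constructor
    · intro he
      have h0 : (t ^ 2 - 14 * t + 1) ^ 2 / (4 * (t + 1) ^ 4) = 0 := by
        rw [← key, he]; ring
      have h2 : t ^ 2 - 14 * t + 1 = 0 := by
        field_simp at h0
        rw [mul_zero, div_eq_zero_iff] at h0
        rcases h0 with h4 | h4
        · nlinarith [(pow_eq_zero_iff (n := 2) two_ne_zero).mp h4]
        · exact absurd h4 hden.ne'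
      rw [factor] at h2
      rcases mul_eq_zero.mp h2 with h3 | h3
      · left; linarith [sub_eq_zero.mp h3]
      · right; linarith [sub_eq_zero.mp h3]
    · intro hcase
      have h2 : t ^ 2 - 14 * t + 1 = 0 := by
        rw [factor]
        rcases hcase with h3 | h3 <;> rw [h3] <;> ring
      have : h k + 1/4 = 0 := by rw [key, h2]; simp
      linarith
end

section
/- Define θ(k, ξ) = ((k² − 1)/(4k)) ξ − 2k(k² − 1)/(k² + 1)². If ξ > 2 or ξ < −1/4, then ∂θ/∂k (k, ξ) ≠ 0 for every real k ≠ 0; that is, in the regions ξ > 2 and ξ < −1/4 the phase θ has no stationary phase point on the real axis. -/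
/-- **No real stationary phase points in the regions `ξ > 2` and `ξ < -1/4`.**
With `θ(k,ξ) = ((k²-1)/(4k))ξ - 2k(k²-1)/(k²+1)²`, if `ξ > 2` or `ξ < -1/4`,
then `∂θ/∂k(k,ξ) ≠ 0` for every real `k ≠ 0`. -/
theorem no_phase_points_regions_I_IV
    (θ : ℝ → ℝ → ℝ)
    (hθ : ∀ k ξ : ℝ, θ k ξ =
      (k ^ 2 - 1) / (4 * k) * ξ - 2 * k * (k ^ 2 - 1) / (k ^ 2 + 1) ^ 2)
    (ξ : ℝ) (hξ : 2 < ξ ∨ ξ < -(1/4 : ℝ)) :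
    ∀ k : ℝ, k ≠ 0 → deriv (fun k' => θ k' ξ) k ≠ 0 := by
  intro k hk
  have hfun : (fun k' => θ k' ξ) =
      fun k' => (k' ^ 2 - 1) / (4 * k') * ξ - 2 * k' * (k' ^ 2 - 1) / (k' ^ 2 + 1) ^ 2 := by
    funext x; exact hθ x ξ
  have hden1 : (4 : ℝ) * k ≠ 0 := mul_ne_zero (by norm_num) hk
  have hden2 : ((k ^ 2 + 1 : ℝ) ^ 2) ≠ 0 := by positivity
  -- derivative of first term
  have hn1 : HasDerivAt (fun k' : ℝ => k' ^ 2 - 1) (2 * k) k := by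
    simpa using (hasDerivAt_pow 2 k).sub_const 1
  have hd1 : HasDerivAt (fun k' : ℝ => 4 * k') 4 k := by
    simpa using (hasDerivAt_id k).const_mul (4 : ℝ)
  have h1 : HasDerivAt (fun k' : ℝ => (k' ^ 2 - 1) / (4 * k') * ξ)
      ((2 * k * (4 * k) - (k ^ 2 - 1) * 4) / (4 * k) ^ 2 * ξ) k :=
    (hn1.div hd1 hden1).mul_const ξ
  -- derivative of second term
  have hn2 : HasDerivAt (fun k' : ℝ => 2 * k' * (k' ^ 2 - 1)) (2 * (3 * k ^ 2) - 2) k := by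
    have heq : (fun k' : ℝ => 2 * k' * (k' ^ 2 - 1)) = fun k' => 2 * k' ^ 3 - 2 * k' := by
      funext x; ring
    rw [heq]
    have h3 : HasDerivAt (fun k' : ℝ => 2 * k' ^ 3) (2 * (3 * k ^ 2)) k := by
      simpa using (hasDerivAt_pow 3 k).const_mul (2 : ℝ)
    have h4 : HasDerivAt (fun k' : ℝ => 2 * k') 2 k := by
      simpa using (hasDerivAt_id k).const_mul (2 : ℝ)
    exact h3.sub h4

  have hd2 : HasDerivAt (fun k' : ℝ => (k' ^ 2 + 1) ^ 2)
      (2 * (k ^ 2 + 1) ^ 1 * (2 * k)) k := by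
    simpa using ((hasDerivAt_pow 2 k).add_const 1).fun_pow 2
  have h2 : HasDerivAt (fun k' : ℝ => 2 * k' * (k' ^ 2 - 1) / (k' ^ 2 + 1) ^ 2)
      (((2 * (3 * k ^ 2) - 2) * (k ^ 2 + 1) ^ 2 -
        2 * k * (k ^ 2 - 1) * (2 * (k ^ 2 + 1) ^ 1 * (2 * k))) / ((k ^ 2 + 1) ^ 2) ^ 2) k :=
    hn2.div hd2 hden2
  have hder : HasDerivAt (fun k' => θ k' ξ)
      ((2 * k * (4 * k) - (k ^ 2 - 1) * 4) / (4 * k) ^ 2 * ξ -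
        ((2 * (3 * k ^ 2) - 2) * (k ^ 2 + 1) ^ 2 -
          2 * k * (k ^ 2 - 1) * (2 * (k ^ 2 + 1) ^ 1 * (2 * k))) / ((k ^ 2 + 1) ^ 2) ^ 2) k := by
    rw [hfun]; exact h1.sub h2
  rw [hder.deriv]
  intro hzero
  have hk2 : (0 : ℝ) < k ^ 2 := by positivity
  have hkp : (0 : ℝ) < (k ^ 2 + 1) := by positivity
  field_simp at hzero
  rcases hξ with hξ | hξ
  · nlinarith [sq_nonneg (k * (k ^ 2 - 1)), sq_nonneg (k ^ 2 - 1),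
      sq_nonneg (k ^ 2 * (k ^ 2 - 1)),
      mul_pos (sub_pos.mpr hξ) (pow_pos hkp 4)]
  · nlinarith [sq_nonneg (k ^ 4 - 14 * k ^ 2 + 1),
      mul_pos (sub_pos.mpr hξ) (pow_pos hkp 4)]
end

section
/- Define θ(k, ξ) = ((k² − 1)/(4k)) ξ − 2k(k² − 1)/(k² + 1)². For every ξ with 0 < ξ < 2, there exists a real number κ > 1 such that the set of stationary phase points { k ∈ ℝ \ {0} : ∂θ/∂k (k, ξ) = 0 } equals { κ, κ⁻¹, −κ, −κ⁻¹ }; in particular this set has exactly four elements. -/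
set_option maxHeartbeats 1000000

/-- **Exactly four real stationary phase points in the region `0 < ξ < 2`.**
With `θ(k,ξ) = ((k²-1)/(4k))ξ - 2k(k²-1)/(k²+1)²`, for every `ξ` with
`0 < ξ < 2` there is a real `κ > 1` such that the set of real stationary
phase points equals `{κ, κ⁻¹, -κ, -κ⁻¹}`, which has exactly four elements. -/
theorem four_phase_points_region_II
    (θ : ℝ → ℝ → ℝ)
    (hθ : ∀ k ξ : ℝ, θ k ξ =
      (k ^ 2 - 1) / (4 * k) * ξ - 2 * k * (k ^ 2 - 1) / (k ^ 2 + 1) ^ 2)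
    (ξ : ℝ) (hξ₀ : 0 < ξ) (hξ₂ : ξ < 2) :
    ∃ κ : ℝ, 1 < κ ∧
      {k : ℝ | k ≠ 0 ∧ deriv (fun k' => θ k' ξ) k = 0}
        = ({κ, κ⁻¹, -κ, -κ⁻¹} : Set ℝ)
      ∧ ({κ, κ⁻¹, -κ, -κ⁻¹} : Set ℝ).ncard = 4 := by
  have hξne : ξ ≠ 0 := ne_of_gt hξ₀
  -- s = sqrt(1+4ξ)
  obtain ⟨v, hs_def⟩ : ∃ v : ℝ, v = Real.sqrt (1 + 4 * ξ) := ⟨_, rfl⟩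
  have hs2 : v ^ 2 = 1 + 4 * ξ := by rw [hs_def]; exact Real.sq_sqrt (by linarith)
  have hs0 : 0 ≤ v := hs_def ▸ Real.sqrt_nonneg _
  have hs_gt : 1 + ξ < v := by nlinarith [sq_nonneg (v - 1 - ξ), sq_nonneg (v + 1 + ξ)]
  -- a = 4(s-1)/ξ, root of ξ a² + 8a - 64 = 0, a > 4
  obtain ⟨a, ha_def⟩ : ∃ a : ℝ, a = 4 * (v - 1) / ξ := ⟨_, rfl⟩
  have hident : ξ * a ^ 2 + 8 * a - 64 = 0 := by
    rw [ha_def]; field_simp; nlinarith [hs2]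
  have ha4 : 4 < a := by
    rw [ha_def, lt_div_iff₀ hξ₀]; linarith
  -- c = a - 2 > 2, d = sqrt(c²-4)
  obtain ⟨c, hc_def⟩ : ∃ c : ℝ, c = a - 2 := ⟨_, rfl⟩
  have hc2 : 2 < c := by rw [hc_def]; linarith
  obtain ⟨d, hd_def⟩ : ∃ d : ℝ, d = Real.sqrt (c ^ 2 - 4) := ⟨_, rfl⟩
  have hd2 : d ^ 2 = c ^ 2 - 4 := by rw [hd_def]; exact Real.sq_sqrt (by nlinarith)
  have hd0 : 0 ≤ d := hd_def ▸ Real.sqrt_nonneg _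
  have hcd : 0 < c - d := by nlinarith
  -- κ
  obtain ⟨κ, hκ_def⟩ : ∃ x : ℝ, x = Real.sqrt ((c + d) / 2) := ⟨_, rfl⟩
  have hκ2 : κ ^ 2 = (c + d) / 2 := by
    rw [hκ_def]; exact Real.sq_sqrt (by nlinarith)
  have hκ0 : 0 ≤ κ := hκ_def ▸ Real.sqrt_nonneg _
  have hκ1 : 1 < κ := by nlinarith
  have hκne : κ ≠ 0 := by intro h; rw [h] at hκ1; linarith
  have hκinvpos : 0 < κ⁻¹ := inv_pos.2 (by linarith)
  have hκinvlt : κ⁻¹ < 1 := by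
    rw [inv_lt_one_iff₀]; right; exact hκ1
  have hprod : (c + d) / 2 * ((c - d) / 2) = 1 := by nlinarith
  have hκinv2 : (κ⁻¹) ^ 2 = (c - d) / 2 := by
    rw [inv_pow, hκ2]
    exact inv_eq_of_mul_eq_one_right hprod
  have hsum : κ ^ 2 + (κ⁻¹) ^ 2 = a - 2 := by
    rw [hκ2, hκinv2]; rw [hc_def]; ring
  have hprodκ : κ ^ 2 * (κ⁻¹) ^ 2 = 1 := by
    rw [hκ2, hκinv2]; exact hprod
  -- factorization of the quartic in k²
  have hfact : ∀ k : ℝ, (k ^ 2 + 1) ^ 2 - a * k ^ 2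
      = (k - κ) * (k + κ) * (k - κ⁻¹) * (k + κ⁻¹) := by
    intro k
    linear_combination k ^ 2 * hsum - hprodκ
  -- the rewritten function
  have hθfun : (fun k' => θ k' ξ)
      = fun k' => (k' ^ 2 - 1) / (4 * k') * ξ - 2 * k' * (k' ^ 2 - 1) / (k' ^ 2 + 1) ^ 2 :=
    funext fun k' => hθ k' ξ
  -- derivative
  have hD : ∀ k : ℝ, k ≠ 0 → HasDerivAt (fun k' => θ k' ξ)
      (ξ * (k ^ 2 + 1) / (4 * k ^ 2) + (2 * k ^ 4 - 12 * k ^ 2 + 2) / (k ^ 2 + 1) ^ 3) k := by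
    intro k hk
    have hden1 : (4 : ℝ) * k ≠ 0 := mul_ne_zero four_ne_zero hk
    have hden2 : (k : ℝ) ^ 2 + 1 ≠ 0 := by positivity
    have h1 : HasDerivAt (fun k' : ℝ => k' ^ 2 - 1) (2 * k) k := by
      simpa using ((hasDerivAt_pow 2 k).sub_const 1)
    have h2 : HasDerivAt (fun k' : ℝ => 4 * k') 4 k := by
      simpa using (hasDerivAt_id k).const_mul (4 : ℝ)
    have h3 := (h1.div h2 hden1).mul_const ξ
    have h4 : HasDerivAt (fun k' : ℝ => 2 * k' * (k' ^ 2 - 1))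
        (2 * (k ^ 2 - 1) + 2 * k * (2 * k)) k := by
      have ha' : HasDerivAt (fun k' : ℝ => 2 * k') 2 k := by
        simpa using (hasDerivAt_id k).const_mul (2 : ℝ)
      exact ha'.mul h1
    have h5 : HasDerivAt (fun k' : ℝ => (k' ^ 2 + 1) ^ 2) (2 * (k ^ 2 + 1) * (2 * k)) k := by
      have hb : HasDerivAt (fun k' : ℝ => k' ^ 2 + 1) (2 * k) k := by
        simpa using ((hasDerivAt_pow 2 k).add_const 1)
      exact (hb.pow 2).congr_deriv (by norm_num)
    have h6 := h4.div h5 (pow_ne_zero 2 hden2)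
    have h7 := h3.sub h6
    rw [hθfun]
    refine h7.congr_deriv ?_
    field_simp
    ring
  -- positivity of the second factor
  have hB : ∀ k : ℝ, 0 < ξ * (k ^ 2 + 1) ^ 2 + (8 + ξ * a) * k ^ 2 := by
    intro k
    have h8a : 0 < 8 + ξ * a := by nlinarith
    positivity
  -- key algebraic identity
  have key : ∀ k : ℝ, ξ * (ξ * (k ^ 2 + 1) ^ 4 + 8 * k ^ 6 - 48 * k ^ 4 + 8 * k ^ 2)
      = ξ * ((k ^ 2 + 1) ^ 2 - a * k ^ 2) * (ξ * (k ^ 2 + 1) ^ 2 + (8 + ξ * a) * k ^ 2) := by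
    intro k
    linear_combination ξ * k ^ 4 * hident
  -- the main characterization
  have main : ∀ k : ℝ, k ≠ 0 →
      (deriv (fun k' => θ k' ξ) k = 0 ↔ (k = κ ∨ k = κ⁻¹ ∨ k = -κ ∨ k = -κ⁻¹)) := by
    intro k hk
    rw [(hD k hk).deriv]
    have hden : (4 : ℝ) * k ^ 2 * (k ^ 2 + 1) ^ 3 ≠ 0 := by positivity
    have hEnum : ξ * (k ^ 2 + 1) / (4 * k ^ 2) + (2 * k ^ 4 - 12 * k ^ 2 + 2) / (k ^ 2 + 1) ^ 3
        = (ξ * (k ^ 2 + 1) ^ 4 + 8 * k ^ 6 - 48 * k ^ 4 + 8 * k ^ 2)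
          / (4 * k ^ 2 * (k ^ 2 + 1) ^ 3) := by
      field_simp
      ring
    rw [hEnum, div_eq_zero_iff]
    have hfac : ((k ^ 2 + 1) ^ 2 - a * k ^ 2 = 0) ↔ (k = κ ∨ k = κ⁻¹ ∨ k = -κ ∨ k = -κ⁻¹) := by
      rw [hfact k]
      simp only [mul_eq_zero, sub_eq_zero, add_eq_zero_iff_eq_neg]
      tauto
    constructor
    · rintro (hnum | hden0)
      · have h1 : ξ * ((k ^ 2 + 1) ^ 2 - a * k ^ 2)
            * (ξ * (k ^ 2 + 1) ^ 2 + (8 + ξ * a) * k ^ 2) = 0 := by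
          rw [← key k, hnum, mul_zero]
        have h2 : (k ^ 2 + 1) ^ 2 - a * k ^ 2 = 0 := by
          rcases mul_eq_zero.1 h1 with h | h
          · rcases mul_eq_zero.1 h with h' | h'
            · exact absurd h' hξne
            · exact h'
          · exact absurd h (ne_of_gt (hB k))
        exact hfac.1 h2
      · exact absurd hden0 hden
    · intro hmem
      left
      have h2 : (k ^ 2 + 1) ^ 2 - a * k ^ 2 = 0 := hfac.2 hmem
      have h3 : ξ * (ξ * (k ^ 2 + 1) ^ 4 + 8 * k ^ 6 - 48 * k ^ 4 + 8 * k ^ 2) = 0 := by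
        rw [key k, h2]; ring
      rcases mul_eq_zero.1 h3 with h | h
      · exact absurd h hξne
      · exact h
  refine ⟨κ, hκ1, ?_, ?_⟩
  · ext k
    simp only [Set.mem_setOf_eq, Set.mem_insert_iff, Set.mem_singleton_iff]
    constructor
    · rintro ⟨hk, hdk⟩
      exact (main k hk).1 hdk
    · intro hk
      have hkne : k ≠ 0 := by
        rcases hk with h | h | h | h <;> subst h
        · exact hκne
        · exact ne_of_gt hκinvpos
        · simpa using hκne
        · exact ne_of_lt (by linarith)
      exact ⟨hkne, (main k hkne).2 hk⟩
  · have h1 : κ ∉ ({κ⁻¹, -κ, -κ⁻¹} : Set ℝ) := by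
      simp only [Set.mem_insert_iff, Set.mem_singleton_iff]
      push_neg
      refine ⟨by linarith, by linarith, by linarith⟩
    have h2 : κ⁻¹ ∉ ({-κ, -κ⁻¹} : Set ℝ) := by
      simp only [Set.mem_insert_iff, Set.mem_singleton_iff]
      push_neg
      refine ⟨by linarith, by linarith⟩
    have h3 : (-κ : ℝ) ≠ -κ⁻¹ := by
      intro h
      have : κ = κ⁻¹ := by linarith
      linarith
    rw [Set.ncard_insert_of_notMem h1, Set.ncard_insert_of_notMem h2, Set.ncard_pair h3]
end

section
/- Define θ(k, ξ) = ((k² − 1)/(4k)) ξ − 2k(k² − 1)/(k² + 1)². For every ξ with −1/4 < ξ < 0, there exist real numbers κ₁ > κ₂ > 1 such that the set of stationary phase points { k ∈ ℝ \ {0} : ∂θ/∂k (k, ξ) = 0 } equals { κ₁, κ₂, κ₂⁻¹, κ₁⁻¹, −κ₁⁻¹, −κ₂⁻¹, −κ₂, −κ₁ }; in particular this set has exactly eight elements. -/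
lemma deriv_theta_aux (ξ k : ℝ) (hk : k ≠ 0) :
    deriv (fun k' : ℝ => (k' ^ 2 - 1) / (4 * k') * ξ - 2 * k' * (k' ^ 2 - 1) / (k' ^ 2 + 1) ^ 2) k
      = (ξ * (k ^ 2 + 1) ^ 4 + 8 * k ^ 2 * (k ^ 4 - 6 * k ^ 2 + 1)) / (4 * k ^ 2 * (k ^ 2 + 1) ^ 3) := by
  have h1 : HasDerivAt (fun k' : ℝ => k' ^ 2 - 1) (2 * k) k := by
    simpa using (hasDerivAt_pow 2 k).sub_const 1
  have h2 : HasDerivAt (fun k' : ℝ => 4 * k') 4 k := by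
    simpa using (hasDerivAt_id k).const_mul (4 : ℝ)
  have hk4 : (4 : ℝ) * k ≠ 0 := by simp [hk]
  have hden : (k ^ 2 + 1 : ℝ) ^ 2 ≠ 0 := by positivity
  have h3 : HasDerivAt (fun k' : ℝ => 2 * k' * (k' ^ 2 - 1)) (2 * (k ^ 2 - 1) + 2 * k * (2 * k)) k := by
    have h3' : HasDerivAt ((fun y : ℝ => 2 * y) * fun k' : ℝ => k' ^ 2 - 1) (2 * (k ^ 2 - 1) + 2 * k * (2 * k)) k := by
      simpa using (((hasDerivAt_id k).const_mul (2 : ℝ)).mul h1)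
    exact h3'
  have h4 : HasDerivAt (fun k' : ℝ => (k' ^ 2 + 1) ^ 2) (2 * (k ^ 2 + 1) ^ 1 * (2 * k)) k := by
    have h4' : HasDerivAt ((fun x : ℝ => x ^ 2 + 1) ^ 2) (2 * (k ^ 2 + 1) ^ 1 * (2 * k)) k := by
      simpa using ((hasDerivAt_pow 2 k).add_const 1).pow 2
    exact h4'
  have H := ((h1.div h2 hk4).mul_const ξ).sub (h3.div h4 hden)
  have H' : HasDerivAt (fun k' : ℝ => (k' ^ 2 - 1) / (4 * k') * ξ - 2 * k' * (k' ^ 2 - 1) / (k' ^ 2 + 1) ^ 2) _ k := H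
  rw [H'.deriv]
  field_simp
  ring

/-- Roots of `k² - s k + 1` with `s > 2`. -/
lemma quad_roots_aux (s : ℝ) (hs : 2 < s) :
    ∃ κ : ℝ, 1 < κ ∧ κ⁻¹ = s - κ ∧ Real.sqrt (s ^ 2 - 4) = 2 * κ - s ∧
      ∀ k : ℝ, k ^ 2 - s * k + 1 = (k - κ) * (k - κ⁻¹) := by
  set r := Real.sqrt (s ^ 2 - 4) with hrdef
  have hr2 : r ^ 2 = s ^ 2 - 4 := Real.sq_sqrt (by nlinarith)
  have hrpos : 0 < r := Real.sqrt_pos.2 (by nlinarith)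
  refine ⟨(s + r) / 2, by nlinarith, ?_, by ring, ?_⟩
  · exact inv_eq_of_mul_eq_one_right (by linear_combination -hr2 / 4)
  · have h1 : ((s + r) / 2) * (s - (s + r) / 2) = 1 := by linear_combination -hr2 / 4
    have hinv : ((s + r) / 2)⁻¹ = s - (s + r) / 2 := inv_eq_of_mul_eq_one_right h1
    intro k
    rw [hinv]
    linear_combination -h1

set_option maxHeartbeats 1600000 in
/-- **Exactly eight real stationary phase points in the region `-1/4 < ξ < 0`.**
With `θ(k,ξ) = ((k²-1)/(4k))ξ - 2k(k²-1)/(k²+1)²`, for every `ξ` with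
`-1/4 < ξ < 0` there are reals `κ₁ > κ₂ > 1` such that the set of real
stationary phase points equals
`{κ₁, κ₂, κ₂⁻¹, κ₁⁻¹, -κ₁⁻¹, -κ₂⁻¹, -κ₂, -κ₁}`, which has exactly eight
elements. -/
theorem eight_phase_points_region_III
    (θ : ℝ → ℝ → ℝ)
    (hθ : ∀ k ξ : ℝ, θ k ξ =
      (k ^ 2 - 1) / (4 * k) * ξ - 2 * k * (k ^ 2 - 1) / (k ^ 2 + 1) ^ 2)
    (ξ : ℝ) (hξ₀ : -(1/4 : ℝ) < ξ) (hξ₁ : ξ < 0) :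
    ∃ κ₁ κ₂ : ℝ, κ₂ < κ₁ ∧ 1 < κ₂ ∧
      {k : ℝ | k ≠ 0 ∧ deriv (fun k' => θ k' ξ) k = 0}
        = ({κ₁, κ₂, κ₂⁻¹, κ₁⁻¹, -κ₁⁻¹, -κ₂⁻¹, -κ₂, -κ₁} : Set ℝ)
      ∧ ({κ₁, κ₂, κ₂⁻¹, κ₁⁻¹, -κ₁⁻¹, -κ₂⁻¹, -κ₂, -κ₁} : Set ℝ).ncard = 8 := by
  have hξne : ξ ≠ 0 := ne_of_lt hξ₁
  obtain ⟨D, hD2, hDpos⟩ : ∃ D : ℝ, D ^ 2 = 64 + 256 * ξ ∧ 0 < D :=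
    ⟨Real.sqrt (64 + 256 * ξ), Real.sq_sqrt (by linarith), Real.sqrt_pos.2 (by linarith)⟩
  have hDlt : D < 8 + 8 * ξ := by nlinarith [hD2, hDpos]
  have hmξ : 0 < -2 * ξ := by linarith
  have hz2pos : (0:ℝ) < (8 - D) / (-2 * ξ) := by
    apply div_pos _ hmξ
    nlinarith
  have hz1pos : (0:ℝ) < (8 + D) / (-2 * ξ) := div_pos (by linarith) hmξ
  obtain ⟨s₂, hs2sq, hs2pos⟩ : ∃ s : ℝ, s ^ 2 = (8 - D) / (-2 * ξ) ∧ 0 < s :=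
    ⟨Real.sqrt _, Real.sq_sqrt hz2pos.le, Real.sqrt_pos.2 hz2pos⟩
  obtain ⟨s₁, hs1sq, hs1pos⟩ : ∃ s : ℝ, s ^ 2 = (8 + D) / (-2 * ξ) ∧ 0 < s :=
    ⟨Real.sqrt _, Real.sq_sqrt hz1pos.le, Real.sqrt_pos.2 hz1pos⟩
  have hz2gt : 4 < s₂ ^ 2 := by rw [hs2sq, lt_div_iff₀ hmξ]; nlinarith
  have hz12 : s₂ ^ 2 < s₁ ^ 2 := by
    rw [hs1sq, hs2sq, div_lt_div_iff_of_pos_right hmξ]; linarith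
  have hs2gt : 2 < s₂ := by nlinarith
  have hs12 : s₂ < s₁ := by nlinarith
  have hs1gt : 2 < s₁ := lt_trans hs2gt hs12
  -- sum and product relations
  have hsum : ξ * (s₁ ^ 2 + s₂ ^ 2) = -8 := by
    rw [hs1sq, hs2sq]
    field_simp
    ring
  have hprod : ξ * (s₁ ^ 2 * s₂ ^ 2) = -64 := by
    rw [hs1sq, hs2sq]
    field_simp
    nlinarith [hD2]
  obtain ⟨κ₁, hκ₁gt, hinv₁, hsqrt₁, hq₁⟩ := quad_roots_aux s₁ hs1gt
  obtain ⟨κ₂, hκ₂gt, hinv₂, hsqrt₂, hq₂⟩ := quad_roots_aux s₂ hs2gt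
  have hκ₁pos : (0:ℝ) < κ₁ := by linarith
  have hκ₂pos : (0:ℝ) < κ₂ := by linarith
  have hi₁pos : (0:ℝ) < κ₁⁻¹ := inv_pos.2 hκ₁pos
  have hi₂pos : (0:ℝ) < κ₂⁻¹ := inv_pos.2 hκ₂pos
  have hm₁ : κ₁ * κ₁⁻¹ = 1 := mul_inv_cancel₀ (ne_of_gt hκ₁pos)
  have hm₂ : κ₂ * κ₂⁻¹ = 1 := mul_inv_cancel₀ (ne_of_gt hκ₂pos)
  -- ordering chain
  have hκ₂₁ : κ₂ < κ₁ := by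
    have hr2 : Real.sqrt (s₂ ^ 2 - 4) < Real.sqrt (s₁ ^ 2 - 4) :=
      Real.sqrt_lt_sqrt (by nlinarith) (by nlinarith)
    rw [hsqrt₁, hsqrt₂] at hr2
    linarith
  have hi₂lt : κ₂⁻¹ < 1 := by nlinarith [hm₂, hi₂pos, hκ₂gt]
  have hi₁₂ : κ₁⁻¹ < κ₂⁻¹ := by nlinarith [hm₁, hm₂, hκ₂₁, mul_pos hi₁pos hi₂pos]
  -- the "plus" quadratics
  have hone₁ : κ₁ * (s₁ - κ₁) = 1 := by rw [← hinv₁]; exact hm₁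
  have hone₂ : κ₂ * (s₂ - κ₂) = 1 := by rw [← hinv₂]; exact hm₂
  have hq₁' : ∀ k : ℝ, k ^ 2 + s₁ * k + 1 = (k + κ₁) * (k + κ₁⁻¹) := by
    intro k; rw [hinv₁]; linear_combination -hone₁
  have hq₂' : ∀ k : ℝ, k ^ 2 + s₂ * k + 1 = (k + κ₂) * (k + κ₂⁻¹) := by
    intro k; rw [hinv₂]; linear_combination -hone₂
  -- factorization of the numerator polynomial
  have hfact : ∀ k : ℝ, ξ * (k ^ 2 + 1) ^ 4 + 8 * k ^ 2 * (k ^ 4 - 6 * k ^ 2 + 1)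
      = ξ * ((k ^ 2 - s₁ * k + 1) * (k ^ 2 + s₁ * k + 1) * (k ^ 2 - s₂ * k + 1) * (k ^ 2 + s₂ * k + 1)) := by
    intro k
    linear_combination (k ^ 2 * (k ^ 2 + 1) ^ 2) * hsum + (-(k ^ 4)) * hprod
  have hQ : ∀ k : ℝ, ξ * (k ^ 2 + 1) ^ 4 + 8 * k ^ 2 * (k ^ 4 - 6 * k ^ 2 + 1)
      = ξ * (k - κ₁) * (k - κ₂) * (k - κ₂⁻¹) * (k - κ₁⁻¹) * (k - -κ₁⁻¹) * (k - -κ₂⁻¹) * (k - -κ₂) * (k - -κ₁) := by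
    intro k
    rw [hfact k, hq₁ k, hq₁' k, hq₂ k, hq₂' k]
    ring
  have hderiv : ∀ k : ℝ, k ≠ 0 → deriv (fun k' => θ k' ξ) k
      = (ξ * (k ^ 2 + 1) ^ 4 + 8 * k ^ 2 * (k ^ 4 - 6 * k ^ 2 + 1)) / (4 * k ^ 2 * (k ^ 2 + 1) ^ 3) := by
    intro k hk
    have hfun : (fun k' => θ k' ξ)
        = fun k' : ℝ => (k' ^ 2 - 1) / (4 * k') * ξ - 2 * k' * (k' ^ 2 - 1) / (k' ^ 2 + 1) ^ 2 :=
      funext fun k' => hθ k' ξ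
    rw [hfun]
    exact deriv_theta_aux ξ k hk
  refine ⟨κ₁, κ₂, hκ₂₁, hκ₂gt, ?_, ?_⟩
  · -- set equality
    have hmem : ∀ x : ℝ, x ≠ 0 →
        ξ * (x - κ₁) * (x - κ₂) * (x - κ₂⁻¹) * (x - κ₁⁻¹) * (x - -κ₁⁻¹) * (x - -κ₂⁻¹) * (x - -κ₂) * (x - -κ₁) = 0 →
        x ≠ 0 ∧ deriv (fun k' => θ k' ξ) x = 0 := by
      intro x hx h0
      refine ⟨hx, ?_⟩
      rw [hderiv x hx, div_eq_zero_iff]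
      left
      rw [hQ x]
      exact h0
    ext k
    simp only [Set.mem_setOf_eq, Set.mem_insert_iff, Set.mem_singleton_iff]
    constructor
    · rintro ⟨hk0, hd⟩
      rw [hderiv k hk0, div_eq_zero_iff] at hd
      have hdenne : (4 * k ^ 2 * (k ^ 2 + 1) ^ 3 : ℝ) ≠ 0 := by positivity
      have hnum := hd.resolve_right hdenne
      rw [hQ k] at hnum
      simp only [mul_eq_zero, sub_eq_zero, or_assoc] at hnum
      rcases hnum with h | h | h | h | h | h | h | h | h
      · exact absurd h hξne
      all_goals tauto
    · rintro (rfl | rfl | rfl | rfl | rfl | rfl | rfl | rfl) <;>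
        refine hmem _ (by first
          | exact ne_of_gt (by linarith)
          | exact ne_of_lt (by linarith)) (by ring)
  · -- cardinality
    rw [Set.ncard_insert_of_notMem (by simp only [Set.mem_insert_iff, Set.mem_singleton_iff, not_or]; exact ⟨ne_of_gt (by linarith), ne_of_gt (by linarith), ne_of_gt (by linarith), ne_of_gt (by linarith), ne_of_gt (by linarith), ne_of_gt (by linarith), ne_of_gt (by linarith)⟩)]
    rw [Set.ncard_insert_of_notMem (by simp only [Set.mem_insert_iff, Set.mem_singleton_iff, not_or]; exact ⟨ne_of_gt (by linarith), ne_of_gt (by linarith), ne_of_gt (by linarith), ne_of_gt (by linarith), ne_of_gt (by linarith), ne_of_gt (by linarith)⟩)]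
    rw [Set.ncard_insert_of_notMem (by simp only [Set.mem_insert_iff, Set.mem_singleton_iff, not_or]; exact ⟨ne_of_gt (by linarith), ne_of_gt (by linarith), ne_of_gt (by linarith), ne_of_gt (by linarith), ne_of_gt (by linarith)⟩)]
    rw [Set.ncard_insert_of_notMem (by simp only [Set.mem_insert_iff, Set.mem_singleton_iff, not_or]; exact ⟨ne_of_gt (by linarith), ne_of_gt (by linarith), ne_of_gt (by linarith), ne_of_gt (by linarith)⟩)]
    rw [Set.ncard_insert_of_notMem (by simp only [Set.mem_insert_iff, Set.mem_singleton_iff, not_or]; exact ⟨ne_of_gt (by linarith), ne_of_gt (by linarith), ne_of_gt (by linarith)⟩)]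
    rw [Set.ncard_insert_of_notMem (by simp only [Set.mem_insert_iff, Set.mem_singleton_iff, not_or]; exact ⟨ne_of_gt (by linarith), ne_of_gt (by linarith)⟩)]
    rw [Set.ncard_insert_of_notMem (by simp only [Set.mem_singleton_iff]; exact ne_of_gt (by linarith))]
    simp
end

section
/- Let m, n : ℝ → ℝ be twice differentiable functions such that m, n, m', n' are bounded, m(x) n(x) ≥ ε₀ for all x for some constant ε₀ > 0, and such that for j = 0, 1, 2 the functions x ↦ (1 + x²) (d/dx)^j (m(x) − 1) and x ↦ (1 + x²) (d/dx)^j (n(x) − 1) belong to L²(ℝ). Define m̃(x) = √(m(x) n(x)) − 1 + (m(x) n'(x) − m'(x) n(x)) / (2 m(x) n(x)). Then x ↦ (1 + x²) m̃(x) ∈ L²(ℝ) and x ↦ (1 + x²) m̃'(x) ∈ L²(ℝ); that is, m̃ belongs to the weighted Sobolev space H^{1,2}(ℝ). -/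
open MeasureTheory

private lemma abs_comb {a b c d Ca Cb Cc Cd : ℝ} (ha : |a| ≤ Ca) (hb : |b| ≤ Cb)
    (hc : |c| ≤ Cc) (hd : |d| ≤ Cd) : |a * b - c * d| ≤ Ca * Cb + Cc * Cd := by
  have h1 : |a * b - c * d| ≤ |a| * |b| + |c| * |d| := by
    calc |a * b - c * d| ≤ |a * b| + |c * d| := abs_sub _ _
    _ = |a| * |b| + |c| * |d| := by rw [abs_mul, abs_mul]
  have h0a := abs_nonneg a; have h0b := abs_nonneg b
  have h0c := abs_nonneg c; have h0d := abs_nonneg d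
  nlinarith [mul_le_mul ha hb h0b (h0a.trans ha), mul_le_mul hc hd h0d (h0c.trans hc)]

private lemma abs_comb' {a b c d Ca Cb Cc Cd : ℝ} (ha : |a| ≤ Ca) (hb : |b| ≤ Cb)
    (hc : |c| ≤ Cc) (hd : |d| ≤ Cd) : |a * b + c * d| ≤ Ca * Cb + Cc * Cd := by
  have h1 : |a * b + c * d| ≤ |a| * |b| + |c| * |d| := by
    calc |a * b + c * d| ≤ |a * b| + |c * d| := abs_add_le _ _
    _ = |a| * |b| + |c| * |d| := by rw [abs_mul, abs_mul]
  have h0a := abs_nonneg a; have h0b := abs_nonneg b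
  have h0c := abs_nonneg c; have h0d := abs_nonneg d
  nlinarith [mul_le_mul ha hb h0b (h0a.trans ha), mul_le_mul hc hd h0d (h0c.trans hc)]

private lemma memL2_bound {h G : ℝ → ℝ} (hG : MemLp G 2)
    (hmeas : AEStronglyMeasurable h (volume : Measure ℝ))
    (hb : ∀ x, |h x| ≤ G x) : MemLp h 2 :=
  hG.mono hmeas (Filter.Eventually.of_forall fun x => by
    simpa [Real.norm_eq_abs] using (hb x).trans (le_abs_self _))

set_option maxHeartbeats 1600000 in
/-- **The potential `m̃` lies in the weighted Sobolev space `H^{1,2}(ℝ)`.**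
If `m, n` are twice differentiable with `m, n, m', n'` bounded,
`m n ≥ ε₀ > 0`, and `(1+x²)(d/dx)ʲ(m-1), (1+x²)(d/dx)ʲ(n-1) ∈ L²` for
`j = 0,1,2`, then `m̃ = √(mn) - 1 + (m n' - m' n)/(2mn)` satisfies
`(1+x²) m̃ ∈ L²` and `(1+x²) m̃' ∈ L²`. -/
theorem mtilde_in_weighted_sobolev
    (m n : ℝ → ℝ) (ε₀ : ℝ) (hε₀ : 0 < ε₀)
    (hm : Differentiable ℝ m) (hm' : Differentiable ℝ (deriv m))
    (hn : Differentiable ℝ n) (hn' : Differentiable ℝ (deriv n))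
    (hmb : ∃ C, ∀ x, |m x| ≤ C) (hnb : ∃ C, ∀ x, |n x| ≤ C)
    (hm'b : ∃ C, ∀ x, |deriv m x| ≤ C) (hn'b : ∃ C, ∀ x, |deriv n x| ≤ C)
    (hlow : ∀ x, ε₀ ≤ m x * n x)
    (hmL2 : ∀ j : ℕ, j ≤ 2 →
      MemLp (fun x => (1 + x ^ 2) * iteratedDeriv j (fun y => m y - 1) x) 2)
    (hnL2 : ∀ j : ℕ, j ≤ 2 →
      MemLp (fun x => (1 + x ^ 2) * iteratedDeriv j (fun y => n y - 1) x) 2)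
    (mt : ℝ → ℝ)
    (hmt : ∀ x, mt x = Real.sqrt (m x * n x) - 1
      + (m x * deriv n x - deriv m x * n x) / (2 * m x * n x)) :
    MemLp (fun x => (1 + x ^ 2) * mt x) 2
    ∧ MemLp (fun x => (1 + x ^ 2) * deriv mt x) 2 := by
  obtain ⟨Cm, hCm⟩ := hmb
  obtain ⟨Cn, hCn⟩ := hnb
  obtain ⟨C1, hC1⟩ := hm'b
  obtain ⟨C2, hC2⟩ := hn'b
  have hCm0 : 0 ≤ Cm := (abs_nonneg _).trans (hCm 0)
  have hCn0 : 0 ≤ Cn := (abs_nonneg _).trans (hCn 0)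
  have hC10 : 0 ≤ C1 := (abs_nonneg _).trans (hC1 0)
  have hC20 : 0 ≤ C2 := (abs_nonneg _).trans (hC2 0)
  have hs : ∀ x, (0:ℝ) < m x * n x := fun x => hε₀.trans_le (hlow x)
  have hw : ∀ x : ℝ, (0:ℝ) < 1 + x ^ 2 := fun x => by positivity
  -- weighted L² facts
  have L0m : MemLp (fun x => (1 + x ^ 2) * (m x - 1)) 2 := by
    simpa [iteratedDeriv_zero] using hmL2 0 (by norm_num)
  have L0n : MemLp (fun x => (1 + x ^ 2) * (n x - 1)) 2 := by
    simpa [iteratedDeriv_zero] using hnL2 0 (by norm_num)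
  have L1m : MemLp (fun x => (1 + x ^ 2) * deriv m x) 2 := by
    simpa [iteratedDeriv_one, deriv_sub_const] using hmL2 1 (by norm_num)
  have L1n : MemLp (fun x => (1 + x ^ 2) * deriv n x) 2 := by
    simpa [iteratedDeriv_one, deriv_sub_const] using hnL2 1 (by norm_num)
  have hdm1 : (deriv fun y => m y - 1) = deriv m := by
    funext y; exact deriv_sub_const (1:ℝ)
  have hdn1 : (deriv fun y => n y - 1) = deriv n := by
    funext y; exact deriv_sub_const (1:ℝ)
  have hitm2 : iteratedDeriv 2 (fun y => m y - 1) = deriv (deriv m) := by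
    rw [iteratedDeriv_succ, iteratedDeriv_one, hdm1]
  have hitn2 : iteratedDeriv 2 (fun y => n y - 1) = deriv (deriv n) := by
    rw [iteratedDeriv_succ, iteratedDeriv_one, hdn1]
  have L2m : MemLp (fun x => (1 + x ^ 2) * deriv (deriv m) x) 2 := by
    have h := hmL2 2 le_rfl
    rwa [hitm2] at h
  have L2n : MemLp (fun x => (1 + x ^ 2) * deriv (deriv n) x) 2 := by
    have h := hnL2 2 le_rfl
    rwa [hitn2] at h
  -- continuity / measurability
  have cm : Continuous m := hm.continuous
  have cn : Continuous n := hn.continuous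
  have cf1 : Continuous (deriv m) := hm'.continuous
  have cg1 : Continuous (deriv n) := hn'.continuous
  have mf2 : Measurable (deriv (deriv m)) := measurable_deriv _
  have mg2 : Measurable (deriv (deriv n)) := measurable_deriv _
  have cw : Continuous (fun x : ℝ => 1 + x ^ 2) := by continuity
  -- abs rewriting helper
  have habsw : ∀ (x u : ℝ), |(1 + x ^ 2) * u| = (1 + x ^ 2) * |u| := fun x u => by
    rw [abs_mul, abs_of_nonneg (hw x).le]
  -- Part 1, piece A : √(mn) - 1
  have hA : MemLp (fun x => (1 + x ^ 2) * (Real.sqrt (m x * n x) - 1)) 2 := by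
    apply memL2_bound
      (G := fun x => Cn * |(1 + x ^ 2) * (m x - 1)| + |(1 + x ^ 2) * (n x - 1)|)
      ((L0m.norm.const_mul Cn).add L0n.norm)
    · exact (cw.mul ((Real.continuous_sqrt.comp (cm.mul cn)).sub
        continuous_const)).aestronglyMeasurable
    · intro x
      have hs0 : (0:ℝ) ≤ m x * n x := (hs x).le
      have hsq := Real.sq_sqrt hs0
      have hsr0 := Real.sqrt_nonneg (m x * n x)
      have h1 : |Real.sqrt (m x * n x) - 1| ≤ |m x * n x - 1| := by
        have he : |Real.sqrt (m x * n x) - 1| * (Real.sqrt (m x * n x) + 1)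
            = |m x * n x - 1| := by
          rw [← abs_of_nonneg (show (0:ℝ) ≤ Real.sqrt (m x * n x) + 1 by linarith),
            ← abs_mul]
          congr 1
          nlinarith [hsq]
        nlinarith [abs_nonneg (Real.sqrt (m x * n x) - 1)]
      have h2 : |m x * n x - 1| ≤ Cn * |m x - 1| + |n x - 1| := by
        have : m x * n x - 1 = (m x - 1) * n x + (n x - 1) * 1 := by ring
        rw [this]
        have := abs_comb' (le_refl |m x - 1|) (hCn x) (le_refl |n x - 1|)
          (le_refl |(1:ℝ)|)
        simpa [mul_comm] using this
      rw [habsw]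
      calc (1 + x ^ 2) * |Real.sqrt (m x * n x) - 1|
          ≤ (1 + x ^ 2) * (Cn * |m x - 1| + |n x - 1|) :=
            mul_le_mul_of_nonneg_left (h1.trans h2) (hw x).le
        _ = Cn * |(1 + x ^ 2) * (m x - 1)| + |(1 + x ^ 2) * (n x - 1)| := by
            rw [habsw, habsw]; ring
  -- Part 1, piece B : (m n' - m' n)/(2mn)
  have hB : MemLp (fun x =>
      (1 + x ^ 2) * ((m x * deriv n x - deriv m x * n x) / (2 * m x * n x))) 2 := by
    apply memL2_bound
      (G := fun x => (Cm / (2 * ε₀)) * |(1 + x ^ 2) * deriv n x|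
        + (Cn / (2 * ε₀)) * |(1 + x ^ 2) * deriv m x|)
      ((L1n.norm.const_mul _).add (L1m.norm.const_mul _))
    · apply Continuous.aestronglyMeasurable
      exact cw.mul (((cm.mul cg1).sub (cf1.mul cn)).div
        ((continuous_const.mul cm).mul cn)
        (fun x => by have := hs x; intro h; nlinarith))
    · intro x
      have hnum : |m x * deriv n x - deriv m x * n x|
          ≤ Cm * |deriv n x| + |deriv m x| * Cn :=
        abs_comb (hCm x) (le_refl _) (le_refl _) (hCn x)
      have hden : (2 * ε₀) ≤ |2 * m x * n x| := by
        rw [abs_of_pos (by nlinarith [hs x])]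
        nlinarith [hlow x]
      have hq : |(m x * deriv n x - deriv m x * n x) / (2 * m x * n x)|
          ≤ (Cm * |deriv n x| + |deriv m x| * Cn) / (2 * ε₀) := by
        rw [abs_div]
        exact div_le_div₀ (add_nonneg (mul_nonneg hCm0 (abs_nonneg _))
          (mul_nonneg (abs_nonneg _) hCn0)) hnum (by positivity) hden
      rw [habsw]
      calc (1 + x ^ 2) * |(m x * deriv n x - deriv m x * n x) / (2 * m x * n x)|
          ≤ (1 + x ^ 2) * ((Cm * |deriv n x| + |deriv m x| * Cn) / (2 * ε₀)) :=
            mul_le_mul_of_nonneg_left hq (hw x).le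
        _ = (Cm / (2 * ε₀)) * |(1 + x ^ 2) * deriv n x|
            + (Cn / (2 * ε₀)) * |(1 + x ^ 2) * deriv m x| := by
            rw [habsw, habsw]; ring
  have part1 : MemLp (fun x => (1 + x ^ 2) * mt x) 2 := by
    have he : (fun x => (1 + x ^ 2) * mt x)
        = fun x => (1 + x ^ 2) * (Real.sqrt (m x * n x) - 1)
          + (1 + x ^ 2) * ((m x * deriv n x - deriv m x * n x) / (2 * m x * n x)) := by
      funext x; rw [hmt x]; ring
    rw [he]
    exact hA.add hB
  refine ⟨part1, ?_⟩
  -- derivative computation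
  have hmtfun : mt = fun x => Real.sqrt (m x * n x) - 1
      + (m x * deriv n x - deriv m x * n x) / (2 * m x * n x) := funext hmt
  set T1 : ℝ → ℝ := fun x =>
    (deriv m x * n x + m x * deriv n x) / (2 * Real.sqrt (m x * n x)) with hT1def
  set T2 : ℝ → ℝ := fun x =>
    ((m x * deriv (deriv n) x - deriv (deriv m) x * n x) * (2 * m x * n x)
      - (m x * deriv n x - deriv m x * n x)
        * (2 * (deriv m x * n x + m x * deriv n x))) / (2 * m x * n x) ^ 2 with hT2def
  have hderiv : ∀ x, HasDerivAt mt (T1 x + T2 x) x := by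
    intro x
    have hmx : HasDerivAt m (deriv m x) x := (hm x).hasDerivAt
    have hnx : HasDerivAt n (deriv n x) x := (hn x).hasDerivAt
    have hf1x : HasDerivAt (deriv m) (deriv (deriv m) x) x := (hm' x).hasDerivAt
    have hg1x : HasDerivAt (deriv n) (deriv (deriv n) x) x := (hn' x).hasDerivAt
    have hprod : HasDerivAt (fun y => m y * n y)
        (deriv m x * n x + m x * deriv n x) x := hmx.mul hnx
    have hsqrt : HasDerivAt (fun y => Real.sqrt (m y * n y)) (T1 x) x := by
      have h := (Real.hasDerivAt_sqrt (ne_of_gt (hs x))).comp x hprod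
      rw [hT1def]
      refine h.congr_deriv ?_
      field_simp
    have hA' : HasDerivAt (fun y => Real.sqrt (m y * n y) - 1) (T1 x) x :=
      hsqrt.sub_const 1
    have hN : HasDerivAt (fun y => m y * deriv n y - deriv m y * n y)
        (m x * deriv (deriv n) x - deriv (deriv m) x * n x) x := by
      have h := (hmx.mul hg1x).sub (hf1x.mul hnx)
      refine h.congr_deriv ?_
      ring
    have hD : HasDerivAt (fun y => 2 * m y * n y)
        (2 * (deriv m x * n x + m x * deriv n x)) x := by
      have h := hprod.const_mul 2
      have he : (fun y => 2 * m y * n y) = fun y => 2 * (m y * n y) := by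
        funext y; ring
      rw [he]
      exact h
    have hB' : HasDerivAt
        (fun y => (m y * deriv n y - deriv m y * n y) / (2 * m y * n y)) (T2 x) x := by
      have hne : 2 * m x * n x ≠ 0 := by have := hs x; intro h; nlinarith
      exact hN.div hD hne
    rw [hmtfun]
    exact hA'.add hB'
  have hDeq : deriv mt = fun x => T1 x + T2 x := funext fun x => (hderiv x).deriv
  -- T1 piece
  have hsqlow : ∀ x, Real.sqrt ε₀ ≤ Real.sqrt (m x * n x) := fun x =>
    Real.sqrt_le_sqrt (hlow x)
  have hsqpos : (0:ℝ) < Real.sqrt ε₀ := Real.sqrt_pos.mpr hε₀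
  have hT1 : MemLp (fun x => (1 + x ^ 2) * T1 x) 2 := by
    apply memL2_bound
      (G := fun x => (Cn / (2 * Real.sqrt ε₀)) * |(1 + x ^ 2) * deriv m x|
        + (Cm / (2 * Real.sqrt ε₀)) * |(1 + x ^ 2) * deriv n x|)
      ((L1m.norm.const_mul _).add (L1n.norm.const_mul _))
    · apply Continuous.aestronglyMeasurable
      refine cw.mul (((cf1.mul cn).add (cm.mul cg1)).div
        (continuous_const.mul (Real.continuous_sqrt.comp (cm.mul cn)))
        (fun x => ?_))
      have := (hsqpos.trans_le (hsqlow x))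
      positivity
    · intro x
      have hnum : |deriv m x * n x + m x * deriv n x|
          ≤ |deriv m x| * Cn + Cm * |deriv n x| :=
        abs_comb' (le_refl _) (hCn x) (hCm x) (le_refl _)
      have hden : 2 * Real.sqrt ε₀ ≤ |2 * Real.sqrt (m x * n x)| := by
        rw [abs_of_pos (by nlinarith [hsqpos.trans_le (hsqlow x)])]
        nlinarith [hsqlow x]
      have hq : |T1 x| ≤ (|deriv m x| * Cn + Cm * |deriv n x|)
          / (2 * Real.sqrt ε₀) := by
        rw [hT1def]
        simp only
        rw [abs_div]
        exact div_le_div₀ (add_nonneg (mul_nonneg (abs_nonneg _) hCn0)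
          (mul_nonneg hCm0 (abs_nonneg _))) hnum (by positivity) hden
      rw [habsw]
      calc (1 + x ^ 2) * |T1 x|
          ≤ (1 + x ^ 2) * ((|deriv m x| * Cn + Cm * |deriv n x|)
              / (2 * Real.sqrt ε₀)) := mul_le_mul_of_nonneg_left hq (hw x).le
        _ = (Cn / (2 * Real.sqrt ε₀)) * |(1 + x ^ 2) * deriv m x|
            + (Cm / (2 * Real.sqrt ε₀)) * |(1 + x ^ 2) * deriv n x| := by
            rw [habsw, habsw]; ring
  -- T2 piece
  have hT2 : MemLp (fun x => (1 + x ^ 2) * T2 x) 2 := by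
    set K : ℝ := 2 * (C1 * Cn + Cm * C2) with hK
    have hK0 : 0 ≤ K := by positivity
    apply memL2_bound
      (G := fun x =>
        ((2 * Cm * Cn) * Cm / (4 * ε₀ ^ 2)) * |(1 + x ^ 2) * deriv (deriv n) x|
        + ((2 * Cm * Cn) * Cn / (4 * ε₀ ^ 2)) * |(1 + x ^ 2) * deriv (deriv m) x|
        + (K * Cm / (4 * ε₀ ^ 2)) * |(1 + x ^ 2) * deriv n x|
        + (K * Cn / (4 * ε₀ ^ 2)) * |(1 + x ^ 2) * deriv m x|)
      ((((L2n.norm.const_mul _).add (L2m.norm.const_mul _)).add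
        (L1n.norm.const_mul _)).add (L1m.norm.const_mul _))
    · apply AEStronglyMeasurable.mul cw.aestronglyMeasurable
      apply Measurable.aestronglyMeasurable
      apply Measurable.div
      · exact (((cm.measurable.mul mg2).sub (mf2.mul cn.measurable)).mul
          ((measurable_const.mul cm.measurable).mul cn.measurable)).sub
          (((cm.measurable.mul cg1.measurable).sub
            (cf1.measurable.mul cn.measurable)).mul
          (measurable_const.mul ((cf1.measurable.mul cn.measurable).add
            (cm.measurable.mul cg1.measurable))))
      · exact (((measurable_const.mul cm.measurable).mul cn.measurable).pow
          measurable_const)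
    · intro x
      -- bounds on the factors
      have hfA : |m x * deriv (deriv n) x - deriv (deriv m) x * n x|
          ≤ Cm * |deriv (deriv n) x| + |deriv (deriv m) x| * Cn :=
        abs_comb (hCm x) (le_refl _) (le_refl _) (hCn x)
      have hfB : |2 * m x * n x| ≤ 2 * Cm * Cn := by
        rw [abs_mul, abs_mul]
        have h2 : |(2:ℝ)| = 2 := by norm_num
        rw [h2]
        nlinarith [hCm x, hCn x, abs_nonneg (m x), abs_nonneg (n x)]
      have hfC : |m x * deriv n x - deriv m x * n x|
          ≤ Cm * |deriv n x| + |deriv m x| * Cn :=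
        abs_comb (hCm x) (le_refl _) (le_refl _) (hCn x)
      have hfD : |2 * (deriv m x * n x + m x * deriv n x)| ≤ K := by
        rw [abs_mul]
        have h2 : |(2:ℝ)| = 2 := by norm_num
        rw [h2, hK]
        have := abs_comb' (hC1 x) (hCn x) (hCm x) (hC2 x)
        nlinarith [this]
      have hnum : |(m x * deriv (deriv n) x - deriv (deriv m) x * n x)
            * (2 * m x * n x)
          - (m x * deriv n x - deriv m x * n x)
            * (2 * (deriv m x * n x + m x * deriv n x))|
          ≤ (Cm * |deriv (deriv n) x| + |deriv (deriv m) x| * Cn) * (2 * Cm * Cn)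
            + (Cm * |deriv n x| + |deriv m x| * Cn) * K :=
        abs_comb hfA hfB hfC hfD
      have hden : 4 * ε₀ ^ 2 ≤ |(2 * m x * n x) ^ 2| := by
        rw [abs_of_nonneg (by positivity)]
        nlinarith [hlow x, hs x, hε₀]
      have hq : |T2 x| ≤ ((Cm * |deriv (deriv n) x| + |deriv (deriv m) x| * Cn)
            * (2 * Cm * Cn)
          + (Cm * |deriv n x| + |deriv m x| * Cn) * K) / (4 * ε₀ ^ 2) := by
        rw [hT2def]
        simp only
        rw [abs_div]
        refine div_le_div₀ ?_ hnum (by positivity) hden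
        have h1 : 0 ≤ Cm * |deriv (deriv n) x| + |deriv (deriv m) x| * Cn :=
          add_nonneg (mul_nonneg hCm0 (abs_nonneg _)) (mul_nonneg (abs_nonneg _) hCn0)
        have h2 : 0 ≤ Cm * |deriv n x| + |deriv m x| * Cn :=
          add_nonneg (mul_nonneg hCm0 (abs_nonneg _)) (mul_nonneg (abs_nonneg _) hCn0)
        have h3 : (0:ℝ) ≤ 2 * Cm * Cn := by positivity
        nlinarith [mul_nonneg h1 h3, mul_nonneg h2 hK0]
      rw [habsw]
      calc (1 + x ^ 2) * |T2 x|
          ≤ (1 + x ^ 2) * (((Cm * |deriv (deriv n) x| + |deriv (deriv m) x| * Cn)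
              * (2 * Cm * Cn)
            + (Cm * |deriv n x| + |deriv m x| * Cn) * K) / (4 * ε₀ ^ 2)) :=
            mul_le_mul_of_nonneg_left hq (hw x).le
        _ = ((2 * Cm * Cn) * Cm / (4 * ε₀ ^ 2)) * |(1 + x ^ 2) * deriv (deriv n) x|
            + ((2 * Cm * Cn) * Cn / (4 * ε₀ ^ 2)) * |(1 + x ^ 2) * deriv (deriv m) x|
            + (K * Cm / (4 * ε₀ ^ 2)) * |(1 + x ^ 2) * deriv n x|
            + (K * Cn / (4 * ε₀ ^ 2)) * |(1 + x ^ 2) * deriv m x| := by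
            rw [habsw, habsw, habsw, habsw]; ring
  have he2 : (fun x => (1 + x ^ 2) * deriv mt x)
      = fun x => (1 + x ^ 2) * T1 x + (1 + x ^ 2) * T2 x := by
    funext x
    rw [hDeq]
    ring
  rw [he2]
  exact hT1.add hT2
end
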